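/- Let x ∈ I have continued fraction coefficients (a_j)_{j≥1}, let n ≥ 3 be odd with Σ_{j=1}^n log a_j > 0, and let y ∈ I_n(x) \ I_{n+1}(x). Then ( (1/n) Σ_{j=1}^{⌊n/2⌋} log a_{2j} ) / ( (1/n) Σ_{j=1}^{n+3} log(a_j+1) + C_1(n)/n ) ≤ log|f_2(x)−f_2(y)| / log|x−y| ≤ ( (1/n) Σ_{j=1}^{⌊n/2⌋+3} log(a_{2j}+1) + C_2(n)/n ) / ( (1/n) Σ_{j=1}^n log a_j ), where C_1(n) = (log 2)/2 + log max( (a_{n+2}+2)/(a_{n+2}+1), (a_{n+3}+2)/(a_{n+3}+1) ) and C_2(n) = (log 2)/2 + log max( (a_{2⌊n/2⌋+4}+2)/(a_{2⌊n/2⌋+4}+1), (a_{2⌊n/2⌋+6}+2)/(a_{2⌊n/2⌋+6}+1) ). -/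

import Mathlib

/-!
Write `σₖ = (-1)^k` and `cₖ = pₖ/qₖ` for the convergents of `x`. The convergents alternate
around `x`: `0 < σₖ (x - cₖ) < 1/(qₖ qₖ₊₁)`, and `σₖ (x - cₖ) > σₖ (cₖ₊₂ - cₖ) = aₖ₊₁/(qₖ qₖ₊₂)
≥ 1/(2 qₖ₊₁²)`. If the expansions of `x` and `y` first differ at index `n`, then `y` lies beyond
`cₙ₊₁` or `cₙ₊₂` as seen from `x`, so `1/(2 qₙ₊₃²) ≤ |x - y| ≤ 1/qₙ²`; together with
`a₁ ⋯ aₙ ≤ qₙ ≤ (a₁ + 1) ⋯ (aₙ + 1)` this bounds `-log |x - y|` on both sides. The expansions of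
`f₂ x` and `f₂ y` first differ at index `⌊n/2⌋`, which gives the matching bounds for
`-log |f₂ x - f₂ y|`, and the quotient of the two estimates is the claim: the constants
`C₁, C₂` only have to absorb the `log 2`.
-/

open Filter Finset MeasureTheory

/-- `qden a n` is the denominator `q_n` of the continued fraction with partial
quotients `a_1 = a 0, a_2 = a 1, …` (0-indexed sequence `a`), defined by
`q_0 = 1`, `q_1 = a_1`, `q_n = a_n q_{n-1} + q_{n-2}`. -/
def qden (a : ℕ → ℕ+) : ℕ → ℕ
  | 0 => 1
  | 1 => a 0
  | (n+2) => (a (n+1) : ℕ) * qden a (n+1) + qden a n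

/-- `pnum a n` is the numerator `p_n`, defined by `p_0 = 0`, `p_1 = 1`,
`p_n = a_n p_{n-1} + p_{n-2}`. -/
def pnum (a : ℕ → ℕ+) : ℕ → ℕ
  | 0 => 0
  | 1 => 1
  | (n+2) => (a (n+1) : ℕ) * pnum a (n+1) + pnum a n

/-- The value `[a_1, a_2, …]` of the infinite continued fraction with partial quotients
`a_1 = a 0, a_2 = a 1, …`, i.e. the limit of the convergents `p_n / q_n` (which always
exists). -/
noncomputable def cfVal (a : ℕ → ℕ+) : ℝ :=
  limUnder atTop (fun n => (pnum a n : ℝ) / (qden a n : ℝ))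

/-- The set `I` of irrational numbers of `[0,1]`. -/
def Iirr : Set ℝ := {x | x ∈ Set.Icc (0:ℝ) 1 ∧ Irrational x}

/-- The fundamental interval `I_n(x)` of rank `n` for `x = [a_1, a_2, …]`: the set of those
irrationals `y = [b_1, b_2, …]` whose first `n` partial quotients agree with those of `x`. -/
def fundInt (a : ℕ → ℕ+) (n : ℕ) : Set ℝ :=
  {y | ∃ b : ℕ → ℕ+, cfVal b = y ∧ ∀ j < n, b j = a j}

/-- The (unique) sequence of partial quotients of `x`, when `x` has a continued
fraction expansion. -/
noncomputable def coeff (x : ℝ) : ℕ → ℕ+ := by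
  classical
  exact if h : ∃ a : ℕ → ℕ+, cfVal a = x then h.choose else fun _ => 1

/-- First component of Cantor's bijection: `f₁([a_1,a_2,…]) = [a_1,a_3,a_5,…]`. -/
noncomputable def cantorF1 (x : ℝ) : ℝ := cfVal (fun j => coeff x (2*j))

/-- Second component of Cantor's bijection: `f₂([a_1,a_2,…]) = [a_2,a_4,a_6,…]`. -/
noncomputable def cantorF2 (x : ℝ) : ℝ := cfVal (fun j => coeff x (2*j+1))

section ContinuantBounds

variable (a : ℕ → ℕ+)

theorem qden_pos : ∀ n, 0 < qden a n
  | 0 => Nat.one_pos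
  | 1 => (a 0).pos
  | n + 2 => Nat.add_pos_right _ (qden_pos n)

theorem pnum_add_two_cast (n : ℕ) :
    (pnum a (n + 2) : ℝ) = (a (n + 1) : ℝ) * pnum a (n + 1) + pnum a n := by
  simp [pnum]

theorem qden_add_two_cast (n : ℕ) :
    (qden a (n + 2) : ℝ) = (a (n + 1) : ℝ) * qden a (n + 1) + qden a n := by
  simp [qden]

theorem qden_le_qden_succ : ∀ n, qden a n ≤ qden a (n + 1)
  | 0 => (a 0).pos
  | n + 1 => le_add_right (Nat.le_mul_of_pos_left _ (a (n + 1)).pos)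

theorem qden_add_two_le (n : ℕ) : qden a (n + 2) ≤ 2 * a (n + 1) * qden a (n + 1) := by
  have := qden_le_qden_succ a n
  have := Nat.le_mul_of_pos_left (qden a (n + 1)) (a (n + 1)).pos
  simp only [qden]
  nlinarith

theorem two_pow_le_qden_mul_qden_succ : ∀ n, 2 ^ n ≤ qden a n * qden a (n + 1)
  | 0 => by simp only [qden, pow_zero, one_mul]; exact (a 0).pos
  | n + 1 => by
      have h2 : 2 * qden a n ≤ qden a (n + 2) := by
        have := Nat.le_mul_of_pos_left (qden a (n + 1)) (a (n + 1)).pos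
        have := qden_le_qden_succ a n
        simp only [qden]
        omega
      calc 2 ^ (n + 1) ≤ 2 * (qden a n * qden a (n + 1)) := by
            rw [pow_succ']; exact Nat.mul_le_mul_left _ (two_pow_le_qden_mul_qden_succ n)
        _ ≤ qden a (n + 1) * qden a (n + 2) := by nlinarith

theorem prod_le_qden : ∀ n, ∏ j ∈ range n, (a j : ℕ) ≤ qden a n
  | 0 => by simp [qden]
  | 1 => by simp [qden]
  | n + 2 => by
      rw [prod_range_succ, mul_comm]
      exact le_add_right (Nat.mul_le_mul_left _ (prod_le_qden (n + 1)))

theorem qden_le_prod_add_one : ∀ n, qden a n ≤ ∏ j ∈ range n, ((a j : ℕ) + 1)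
  | 0 => by simp [qden]
  | 1 => by simp [qden]
  | n + 2 => by
      rw [prod_range_succ]
      have := qden_le_qden_succ a n
      have := qden_le_prod_add_one (n + 1)
      calc qden a (n + 2) ≤ qden a (n + 1) * ((a (n + 1) : ℕ) + 1) := by
            simp only [qden]; nlinarith
        _ ≤ _ := Nat.mul_le_mul_right _ this

theorem pnum_mul_qden_sub : ∀ n,
    (pnum a (n + 1) : ℝ) * qden a n - pnum a n * qden a (n + 1) = (-1) ^ n
  | 0 => by simp [pnum, qden]
  | n + 1 => by
      rw [pnum_add_two_cast, qden_add_two_cast]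
      linear_combination (-1 : ℝ) * pnum_mul_qden_sub n

end ContinuantBounds

noncomputable def cfConv (a : ℕ → ℕ+) (n : ℕ) : ℝ := pnum a n / qden a n

section Convergents

variable (a : ℕ → ℕ+)

theorem qden_cast_pos (n : ℕ) : (0 : ℝ) < qden a n := by exact_mod_cast qden_pos a n

theorem cfConv_succ_sub (k : ℕ) :
    cfConv a (k + 1) - cfConv a k = (-1) ^ k / (qden a k * qden a (k + 1)) := by
  rw [cfConv, cfConv, div_sub_div _ _ (qden_cast_pos a _).ne' (qden_cast_pos a _).ne',
    ← pnum_mul_qden_sub a k]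
  ring

theorem neg_one_pow_mul_cfConv_add_two_sub (k : ℕ) :
    (-1) ^ k * (cfConv a (k + 2) - cfConv a k) = a (k + 1) / (qden a k * qden a (k + 2)) := by
  have := (qden_cast_pos a k).ne'
  have := (qden_cast_pos a (k + 1)).ne'
  have := (qden_cast_pos a (k + 2)).ne'
  have hsq : ((-1 : ℝ) ^ k) ^ 2 = 1 := by rw [← pow_mul, mul_comm, pow_mul, neg_one_sq, one_pow]
  rw [show cfConv a (k + 2) - cfConv a k
      = (cfConv a (k + 2) - cfConv a (k + 1)) + (cfConv a (k + 1) - cfConv a k) by ring,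
    cfConv_succ_sub, cfConv_succ_sub]
  field_simp
  rw [qden_add_two_cast]
  linear_combination (↑↑(a (k + 1)) * (qden a (k + 1) : ℝ)) * hsq

theorem cauchySeq_cfConv : CauchySeq (cfConv a) := by
  refine cauchySeq_of_le_geometric (1 / 2) 1 (by norm_num) fun n => ?_
  have := qden_cast_pos a n
  have := qden_cast_pos a (n + 1)
  rw [dist_comm, Real.dist_eq, cfConv_succ_sub, abs_div, abs_neg_one_pow,
    abs_of_pos (by positivity), one_mul, div_pow, one_pow]
  exact one_div_le_one_div_of_le (by positivity)
    (by exact_mod_cast two_pow_le_qden_mul_qden_succ a n)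

theorem tendsto_cfConv : Tendsto (cfConv a) atTop (nhds (cfVal a)) := by
  obtain ⟨L, hL⟩ := cauchySeq_tendsto_of_complete (cauchySeq_cfConv a)
  rwa [show cfVal a = L from hL.limUnder_eq]

theorem neg_one_pow_mul_cfVal_sub_cfConv_pos (k : ℕ) :
    0 < (-1) ^ k * (cfVal a - cfConv a k) := by
  set u : ℕ → ℝ := fun j => (-1) ^ k * cfConv a (k + 2 * j)
  have hu : StrictMono u := strictMono_nat_of_lt_succ fun j => by
    have h := neg_one_pow_mul_cfConv_add_two_sub a (k + 2 * j)
    have : (0 : ℝ) < a (k + 2 * j + 1) / (qden a (k + 2 * j) * qden a (k + 2 * j + 2)) := by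
      have := qden_cast_pos a (k + 2 * j)
      have := qden_cast_pos a (k + 2 * j + 2)
      positivity
    rw [pow_add, pow_mul, neg_one_sq, one_pow, mul_one] at h
    simp only [u, show k + 2 * (j + 1) = k + 2 * j + 2 by ring]
    linarith
  have hlim : Tendsto u atTop (nhds ((-1) ^ k * cfVal a)) :=
    ((tendsto_cfConv a).comp (tendsto_atTop_mono (fun j => show j ≤ k + 2 * j by omega) tendsto_id)).const_mul _
  have h01 : u 0 < u 1 := hu zero_lt_one
  have h1 : u 1 ≤ (-1) ^ k * cfVal a := hu.monotone.ge_of_tendsto hlim 1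
  simp only [u, mul_zero, add_zero] at h01 h1
  linarith

theorem neg_one_pow_mul_cfVal_sub_cfConv_lt (k : ℕ) :
    (-1) ^ k * (cfVal a - cfConv a k) < 1 / (qden a k * qden a (k + 1)) := by
  have h := neg_one_pow_mul_cfVal_sub_cfConv_pos a (k + 1)
  calc (-1) ^ k * (cfVal a - cfConv a k)
      = (-1) ^ k * (cfConv a (k + 1) - cfConv a k)
        - (-1) ^ (k + 1) * (cfVal a - cfConv a (k + 1)) := by ring
    _ < (-1) ^ k * (cfConv a (k + 1) - cfConv a k) := by linarith
    _ = _ := by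
      rw [cfConv_succ_sub, mul_div_assoc', ← pow_add, ← two_mul, pow_mul, neg_one_sq, one_pow]

theorem one_div_two_mul_sq_le_neg_one_pow_mul_cfVal_sub_cfConv (k : ℕ) :
    1 / (2 * (qden a (k + 1) : ℝ) ^ 2) ≤ (-1) ^ k * (cfVal a - cfConv a k) := by
  have h := neg_one_pow_mul_cfVal_sub_cfConv_pos a (k + 2)
  rw [pow_add, neg_one_sq, mul_one] at h
  have hq : (qden a k : ℝ) * qden a (k + 2) ≤ a (k + 1) * (2 * (qden a (k + 1) : ℝ) ^ 2) := by
    have h1 : (qden a k : ℝ) ≤ qden a (k + 1) := by exact_mod_cast qden_le_qden_succ a k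
    have h2 : (qden a (k + 2) : ℝ) ≤ 2 * a (k + 1) * qden a (k + 1) := by
      exact_mod_cast qden_add_two_le a k
    nlinarith [qden_cast_pos a k, qden_cast_pos a (k + 2)]
  calc 1 / (2 * (qden a (k + 1) : ℝ) ^ 2) ≤ a (k + 1) / (qden a k * qden a (k + 2)) := by
        have := qden_cast_pos a k
        have := qden_cast_pos a (k + 1)
        have := qden_cast_pos a (k + 2)
        rw [div_le_div_iff₀ (by positivity) (by positivity)]
        linarith
    _ = (-1) ^ k * (cfConv a (k + 2) - cfConv a k) := (neg_one_pow_mul_cfConv_add_two_sub a k).symm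
    _ ≤ _ := by linarith

end Convergents

section Agreement

variable {a b : ℕ → ℕ+} {m : ℕ}

theorem pnum_qden_eq_of_agree (h : ∀ j < m, b j = a j) :
    ∀ k ≤ m, pnum b k = pnum a k ∧ qden b k = qden a k
  | 0, _ => ⟨rfl, rfl⟩
  | 1, hk => by simp [pnum, qden, h 0 hk]
  | k + 2, hk => by
      obtain ⟨hp1, hq1⟩ := pnum_qden_eq_of_agree h (k + 1) (by omega)
      obtain ⟨hp0, hq0⟩ := pnum_qden_eq_of_agree h k (by omega)
      simp only [pnum, qden, h (k + 1) (by omega), hp1, hq1, hp0, hq0, and_self]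

theorem pnum_succ_of_agree (h : ∀ j < m, b j = a j) :
    (pnum b (m + 1) : ℝ) = pnum a (m + 1) + ((b m : ℝ) - a m) * pnum a m := by
  cases m with
  | zero => simp [pnum]
  | succ k =>
    rw [pnum_add_two_cast, pnum_add_two_cast, (pnum_qden_eq_of_agree h (k + 1) le_rfl).1,
      (pnum_qden_eq_of_agree h k (by omega)).1]
    ring

theorem qden_succ_of_agree (h : ∀ j < m, b j = a j) :
    (qden b (m + 1) : ℝ) = qden a (m + 1) + ((b m : ℝ) - a m) * qden a m := by
  cases m with
  | zero => simp [qden]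
  | succ k =>
    rw [qden_add_two_cast, qden_add_two_cast, (pnum_qden_eq_of_agree h (k + 1) le_rfl).2,
      (pnum_qden_eq_of_agree h k (by omega)).2]
    ring

end Agreement

/-- The finite continued fraction `[a 0, …, a (m - 1), a m + t]`. -/
noncomputable def cfConvShift (a : ℕ → ℕ+) (m : ℕ) (t : ℝ) : ℝ :=
  (pnum a (m + 1) + t * pnum a m) / (qden a (m + 1) + t * qden a m)

section Shift

theorem cfConvShift_zero (a : ℕ → ℕ+) (m : ℕ) : cfConvShift a m 0 = cfConv a (m + 1) := by
  simp [cfConvShift, cfConv]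

theorem cfConvShift_inv (a : ℕ → ℕ+) (m : ℕ) :
    cfConvShift a m (a (m + 1) : ℝ)⁻¹ = cfConv a (m + 2) := by
  rw [cfConvShift, cfConv, pnum_add_two_cast, qden_add_two_cast]
  have : (a (m + 1) : ℝ) ≠ 0 := by positivity
  field_simp

theorem cfConvShift_of_agree {a b : ℕ → ℕ+} {m : ℕ} (h : ∀ j < m, b j = a j) (t : ℝ) :
    cfConvShift b m t = cfConvShift a m (t + ((b m : ℝ) - a m)) := by
  obtain ⟨hp, hq⟩ := pnum_qden_eq_of_agree h m le_rfl
  rw [cfConvShift, cfConvShift, pnum_succ_of_agree h, qden_succ_of_agree h, hp, hq]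
  congr 1 <;> ring

theorem neg_one_pow_mul_cfConvShift_le_of_le {a : ℕ → ℕ+} {m : ℕ} {s t : ℝ}
    (hs : 0 < qden a (m + 1) + s * qden a m) (hst : s ≤ t) :
    (-1) ^ m * cfConvShift a m t ≤ (-1) ^ m * cfConvShift a m s := by
  have ht : (0 : ℝ) < qden a (m + 1) + t * qden a m := by
    nlinarith [qden_cast_pos a m]
  have hsq : ((-1 : ℝ) ^ m) ^ 2 = 1 := by rw [← pow_mul, mul_comm, pow_mul, neg_one_sq, one_pow]
  have key : (-1) ^ m * (cfConvShift a m t - cfConvShift a m s)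
      = (s - t) / ((qden a (m + 1) + t * qden a m) * (qden a (m + 1) + s * qden a m)) := by
    rw [cfConvShift, cfConvShift, div_sub_div _ _ ht.ne' hs.ne', mul_div_assoc']
    congr 1
    linear_combination (-1) ^ m * (s - t) * pnum_mul_qden_sub a m + (s - t) * hsq
  have : (s - t) / ((qden a (m + 1) + t * qden a m) * (qden a (m + 1) + s * qden a m)) ≤ 0 :=
    div_nonpos_of_nonpos_of_nonneg (by linarith) (by positivity)
  linarith

end Shift

section Cylinders

variable {a b : ℕ → ℕ+} {m : ℕ}

theorem abs_cfVal_sub_le (h : ∀ j < m, b j = a j) :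
    |cfVal a - cfVal b| ≤ 1 / (qden a m : ℝ) ^ 2 := by
  obtain ⟨hp, hq⟩ := pnum_qden_eq_of_agree h m le_rfl
  have hc : cfConv b m = cfConv a m := by rw [cfConv, cfConv, hp, hq]
  have hx0 := neg_one_pow_mul_cfVal_sub_cfConv_pos a m
  have hy0 := neg_one_pow_mul_cfVal_sub_cfConv_pos b m
  have hx1 := neg_one_pow_mul_cfVal_sub_cfConv_lt a m
  have hy1 := neg_one_pow_mul_cfVal_sub_cfConv_lt b m
  rw [hc] at hy0 hy1
  rw [hq] at hy1
  have := qden_cast_pos a m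
  have hqa : 1 / ((qden a m : ℝ) * qden a (m + 1)) ≤ 1 / (qden a m : ℝ) ^ 2 := by
    rw [sq]; gcongr; exact_mod_cast qden_le_qden_succ a m
  have hqb : 1 / ((qden a m : ℝ) * qden b (m + 1)) ≤ 1 / (qden a m : ℝ) ^ 2 := by
    rw [sq]; gcongr; rw [← hq]; exact_mod_cast qden_le_qden_succ b m
  calc |cfVal a - cfVal b|
      = |(-1) ^ m * (cfVal a - cfConv a m) - (-1) ^ m * (cfVal b - cfConv a m)| := by
        rw [← mul_sub, sub_sub_sub_cancel_right, abs_mul, abs_neg_one_pow, one_mul]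
    _ ≤ 1 / (qden a m : ℝ) ^ 2 :=
        abs_sub_le_of_nonneg_of_le hx0.le (by linarith) hy0.le (by linarith)

/-- If the expansions first differ at index `m`, then `cfVal b` lies beyond one of the
convergents `cfConv a (m + 1)`, `cfConv a (m + 2)`, as seen from `cfVal a`. -/
theorem one_div_two_mul_sq_le_abs_cfVal_sub (h : ∀ j < m, b j = a j) (hne : b m ≠ a m) :
    1 / (2 * (qden a (m + 3) : ℝ) ^ 2) ≤ |cfVal a - cfVal b| := by
  have habs : ∀ u : ℝ, (-1) ^ m * u ≤ |u| := fun u => by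
    simpa [abs_mul, abs_neg_one_pow] using le_abs_self ((-1) ^ m * u)
  rcases lt_or_gt_of_ne hne with hlt | hgt
  · have hd : (b m : ℝ) - a m ≤ -1 := by
      have : (b m : ℝ) + 1 ≤ a m := by exact_mod_cast hlt
      linarith
    have hb : (b (m + 1) : ℝ)⁻¹ ≤ 1 := inv_le_one_of_one_le₀ (by exact_mod_cast (b (m + 1)).pos)
    have hden : (0 : ℝ) < qden a (m + 1) + ((b (m + 1) : ℝ)⁻¹ + ((b m : ℝ) - a m)) * qden a m := by
      have : (0 : ℝ) < qden b (m + 1) + (b (m + 1) : ℝ)⁻¹ * qden b m := by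
        have := qden_cast_pos b (m + 1)
        have := qden_cast_pos b m
        positivity
      rw [qden_succ_of_agree h, (pnum_qden_eq_of_agree h m le_rfl).2] at this
      linarith
    have hshift : (-1) ^ m * cfConv a (m + 1) ≤ (-1) ^ m * cfConv b (m + 2) := by
      rw [← cfConvShift_zero a m, ← cfConvShift_inv b m, cfConvShift_of_agree h]
      exact neg_one_pow_mul_cfConvShift_le_of_le hden (by linarith)
    have hy := neg_one_pow_mul_cfVal_sub_cfConv_pos b (m + 2)
    have hx := one_div_two_mul_sq_le_neg_one_pow_mul_cfVal_sub_cfConv a (m + 1)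
    rw [pow_add, neg_one_sq, mul_one] at hy
    rw [pow_succ (-1 : ℝ) m, mul_neg_one] at hx
    have := qden_cast_pos a (m + 2)
    calc 1 / (2 * (qden a (m + 3) : ℝ) ^ 2) ≤ 1 / (2 * (qden a (m + 2) : ℝ) ^ 2) := by
          gcongr; exact_mod_cast qden_le_qden_succ a (m + 2)
      _ ≤ (-1) ^ m * (cfVal b - cfVal a) := by linarith
      _ ≤ |cfVal a - cfVal b| := abs_sub_comm (cfVal a) _ ▸ habs _
  · have hd : (1 : ℝ) ≤ (b m : ℝ) - a m := by
      have : (a m : ℝ) + 1 ≤ b m := by exact_mod_cast hgt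
      linarith
    have ha : (a (m + 1) : ℝ)⁻¹ ≤ 1 := inv_le_one_of_one_le₀ (by exact_mod_cast (a (m + 1)).pos)
    have hshift : (-1) ^ m * cfConv b (m + 1) ≤ (-1) ^ m * cfConv a (m + 2) := by
      rw [← cfConvShift_zero b m, ← cfConvShift_inv a m, cfConvShift_of_agree h, zero_add]
      have := qden_cast_pos a (m + 1)
      have := qden_cast_pos a m
      exact neg_one_pow_mul_cfConvShift_le_of_le (by positivity) (by linarith)
    have hy := neg_one_pow_mul_cfVal_sub_cfConv_pos b (m + 1)
    have hx := one_div_two_mul_sq_le_neg_one_pow_mul_cfVal_sub_cfConv a (m + 2)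
    rw [pow_succ (-1 : ℝ) m, mul_neg_one] at hy
    rw [pow_add, neg_one_sq, mul_one] at hx
    calc 1 / (2 * (qden a (m + 3) : ℝ) ^ 2) ≤ (-1) ^ m * (cfVal a - cfVal b) := by linarith
      _ ≤ |cfVal a - cfVal b| := habs _

end Cylinders

theorem cfVal_injective : Function.Injective cfVal := by
  intro a b hab
  by_contra hne
  have hex : ∃ m, b m ≠ a m := by
    by_contra! h
    exact hne (funext h).symm
  have hsep := one_div_two_mul_sq_le_abs_cfVal_sub
    (fun j hj => not_not.mp (Nat.find_min hex hj)) (Nat.find_spec hex)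
  rw [hab, sub_self, abs_zero] at hsep
  have := qden_cast_pos a (Nat.find hex + 3)
  have : (0 : ℝ) < 1 / (2 * (qden a (Nat.find hex + 3) : ℝ) ^ 2) := by positivity
  linarith

theorem coeff_cfVal (a : ℕ → ℕ+) : coeff (cfVal a) = a := by
  have hex : ∃ c : ℕ → ℕ+, cfVal c = cfVal a := ⟨a, rfl⟩
  rw [coeff, dif_pos hex]
  exact cfVal_injective hex.choose_spec

theorem exists_agree_ne_of_mem_fundInt_diff {a : ℕ → ℕ+} {n : ℕ} {y : ℝ}
    (hy : y ∈ fundInt a n \ fundInt a (n + 1)) :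
    ∃ b : ℕ → ℕ+, cfVal b = y ∧ (∀ j < n, b j = a j) ∧ b n ≠ a n := by
  obtain ⟨⟨b, hb, hagree⟩, hnot⟩ := hy
  refine ⟨b, hb, hagree, fun hn => hnot ⟨b, hb, fun j hj => ?_⟩⟩
  rcases Nat.lt_succ_iff_lt_or_eq.mp hj with hj | rfl
  exacts [hagree j hj, hn]

theorem cantorF2_cfVal (a : ℕ → ℕ+) : cantorF2 (cfVal a) = cfVal (fun j => a (2 * j + 1)) := by
  rw [cantorF2, coeff_cfVal]

section LogBounds

theorem sum_log_le_log_qden (a : ℕ → ℕ+) (n : ℕ) :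
    ∑ j ∈ range n, Real.log (a j) ≤ Real.log (qden a n) := by
  rw [← Real.log_prod fun j _ => by positivity]
  exact Real.log_le_log (by positivity) (by exact_mod_cast prod_le_qden a n)

theorem log_qden_le_sum_log_add_one (a : ℕ → ℕ+) (n : ℕ) :
    Real.log (qden a n) ≤ ∑ j ∈ range n, Real.log ((a j : ℝ) + 1) := by
  rw [← Real.log_prod fun j _ => by positivity]
  exact Real.log_le_log (qden_cast_pos a n) (by exact_mod_cast qden_le_prod_add_one a n)

variable {a b : ℕ → ℕ+} {m : ℕ}

theorem two_mul_sum_log_le_neg_log_abs_cfVal_sub (h : ∀ j < m, b j = a j) (hne : b m ≠ a m) :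
    2 * ∑ j ∈ range m, Real.log (a j) ≤ -Real.log |cfVal a - cfVal b| := by
  have := qden_cast_pos a (m + 3)
  have hpos : 0 < |cfVal a - cfVal b| :=
    lt_of_lt_of_le (by positivity) (one_div_two_mul_sq_le_abs_cfVal_sub h hne)
  have hlog := Real.log_le_log hpos (abs_cfVal_sub_le h)
  rw [one_div, Real.log_inv, Real.log_pow] at hlog
  have := sum_log_le_log_qden a m
  push_cast at hlog
  linarith

theorem neg_log_abs_cfVal_sub_le (h : ∀ j < m, b j = a j) (hne : b m ≠ a m) :
    -Real.log |cfVal a - cfVal b| ≤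
      Real.log 2 + 2 * ∑ j ∈ range (m + 3), Real.log ((a j : ℝ) + 1) := by
  have := qden_cast_pos a (m + 3)
  have hlog := Real.log_le_log (by positivity) (one_div_two_mul_sq_le_abs_cfVal_sub h hne)
  rw [one_div, Real.log_inv, Real.log_mul two_ne_zero (by positivity), Real.log_pow] at hlog
  have := log_qden_le_sum_log_add_one a (m + 3)
  push_cast at hlog
  linarith

end LogBounds

theorem log_max_add_two_div_add_one_nonneg {u : ℝ} (hu : 0 ≤ u) (v : ℝ) :
    0 ≤ Real.log (max ((u + 2) / (u + 1)) ((v + 2) / (v + 1))) :=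
  Real.log_nonneg (le_max_of_le_left ((one_le_div (by linarith)).mpr (by linarith)))

/-- Since `n` is odd, `⌊n/2⌋ = n/2` (ℕ-division), `2⌊n/2⌋+4 = n+3` and `2⌊n/2⌋+6 = n+5`;
1-indexed coefficients `a_{2j}, a_{n+2}, a_{n+3}, a_{n+5}` are
`a (2j-1), a (n+1), a (n+2), a (n+4)`. -/
theorem holder_ratio_bounds_cantorF2_general (a : ℕ → ℕ+) (x : ℝ)
    (hxa : cfVal a = x) (n : ℕ) (hno : Odd n)
    (hpos : 0 < ∑ j ∈ Finset.range n, Real.log (a j)) (y : ℝ)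
    (hy : y ∈ fundInt a n \ fundInt a (n+1)) :
    ((1 / (n:ℝ)) * ∑ j ∈ Finset.range (n / 2), Real.log (a (2*j+1))) /
        ((1 / (n:ℝ)) * ∑ j ∈ Finset.range (n+3), Real.log ((a j : ℝ) + 1) +
          (Real.log 2 / 2 +
            Real.log (max (((a (n+1) : ℝ) + 2) / ((a (n+1) : ℝ) + 1))
              (((a (n+2) : ℝ) + 2) / ((a (n+2) : ℝ) + 1)))) / (n:ℝ)) ≤
      Real.log |cantorF2 x - cantorF2 y| / Real.log |x - y| ∧
    Real.log |cantorF2 x - cantorF2 y| / Real.log |x - y| ≤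
      ((1 / (n:ℝ)) * ∑ j ∈ Finset.range (n / 2 + 3), Real.log ((a (2*j+1) : ℝ) + 1) +
          (Real.log 2 / 2 +
            Real.log (max (((a (n+2) : ℝ) + 2) / ((a (n+2) : ℝ) + 1))
              (((a (n+4) : ℝ) + 2) / ((a (n+4) : ℝ) + 1)))) / (n:ℝ)) /
        ((1 / (n:ℝ)) * ∑ j ∈ Finset.range n, Real.log (a j)) := by
  obtain ⟨b, rfl, hagree, hne⟩ := exists_agree_ne_of_mem_fundInt_diff hy
  subst hxa
  obtain ⟨l, rfl⟩ := hno
  have hl : (2 * l + 1) / 2 = l := by omega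
  have hagree₂ : ∀ j < l, b (2 * j + 1) = a (2 * j + 1) := fun j hj => hagree _ (by omega)
  have hU₁ := two_mul_sum_log_le_neg_log_abs_cfVal_sub hagree hne
  have hU₂ := neg_log_abs_cfVal_sub_le hagree hne
  have hV₁ := two_mul_sum_log_le_neg_log_abs_cfVal_sub
    (a := fun j => a (2 * j + 1)) (b := fun j => b (2 * j + 1)) hagree₂ hne
  have hV₂ := neg_log_abs_cfVal_sub_le
    (a := fun j => a (2 * j + 1)) (b := fun j => b (2 * j + 1)) hagree₂ hne
  have hSA : 0 ≤ ∑ j ∈ range l, Real.log (a (2 * j + 1)) :=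
    sum_nonneg fun j _ => Real.log_nonneg (by exact_mod_cast (a (2 * j + 1)).pos)
  have hTA : 0 ≤ ∑ j ∈ range (l + 3), Real.log ((a (2 * j + 1) : ℝ) + 1) :=
    sum_nonneg fun j _ => Real.log_nonneg (by simp)
  have hc₁ := log_max_add_two_div_add_one_nonneg (a (2 * l + 2)).val.cast_nonneg (a (2 * l + 3))
  have hc₂ := log_max_add_two_div_add_one_nonneg (a (2 * l + 3)).val.cast_nonneg (a (2 * l + 5))
  have hlog2 := Real.log_nonneg one_le_two
  have hn : ((2 * l + 1 : ℕ) : ℝ) ≠ 0 := by positivity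
  rw [cantorF2_cfVal, cantorF2_cfVal, hl, ← neg_div_neg_eq (Real.log |_ - _|)]
  simp only [one_div_mul_eq_div, ← add_div, div_div_div_cancel_right₀ hn]
  constructor
  · rw [← mul_div_mul_left _ _ two_ne_zero]
    exact div_le_div₀ (by linarith) hV₁ (by linarith) (by linarith)
  · rw [← mul_div_mul_left (_ + _) _ two_ne_zero]
    exact div_le_div₀ (by linarith) (by linarith) (by linarith) hU₁

/-- Hölder-type two-sided bound for `f₂` (Theorem 11 of the paper): for `x ∈ I` with
partial quotients `a` (0-indexed: `a j = a_{j+1}`), `n ≥ 3` odd with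
`∑_{j=1}^n log a_j > 0`, and `y ∈ I_n(x) \\ I_{n+1}(x)`,
the ratio `log|f₂(x)−f₂(y)| / log|x−y|` is bounded below and above as stated.
Since `n` is odd, `⌊n/2⌋ = n/2` (ℕ-division), `2⌊n/2⌋+4 = n+3` and `2⌊n/2⌋+6 = n+5`;
1-indexed coefficients `a_{2j}, a_{n+2}, a_{n+3}, a_{n+5}` are
`a (2j-1), a (n+1), a (n+2), a (n+4)`. -/
theorem holder_ratio_bounds_cantorF2 (a : ℕ → ℕ+) (x : ℝ) (hx : x ∈ Iirr)
    (hxa : cfVal a = x) (n : ℕ) (hn : 3 ≤ n) (hno : Odd n)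
    (hpos : 0 < ∑ j ∈ Finset.range n, Real.log (a j)) (y : ℝ)
    (hy : y ∈ fundInt a n \ fundInt a (n+1)) :
    ((1 / (n:ℝ)) * ∑ j ∈ Finset.range (n / 2), Real.log (a (2*j+1))) /
        ((1 / (n:ℝ)) * ∑ j ∈ Finset.range (n+3), Real.log ((a j : ℝ) + 1) +
          (Real.log 2 / 2 +
            Real.log (max (((a (n+1) : ℝ) + 2) / ((a (n+1) : ℝ) + 1))
              (((a (n+2) : ℝ) + 2) / ((a (n+2) : ℝ) + 1)))) / (n:ℝ)) ≤
      Real.log |cantorF2 x - cantorF2 y| / Real.log |x - y| ∧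
    Real.log |cantorF2 x - cantorF2 y| / Real.log |x - y| ≤
      ((1 / (n:ℝ)) * ∑ j ∈ Finset.range (n / 2 + 3), Real.log ((a (2*j+1) : ℝ) + 1) +
          (Real.log 2 / 2 +
            Real.log (max (((a (n+2) : ℝ) + 2) / ((a (n+2) : ℝ) + 1))
              (((a (n+4) : ℝ) + 2) / ((a (n+4) : ℝ) + 1)))) / (n:ℝ)) /
        ((1 / (n:ℝ)) * ∑ j ∈ Finset.range n, Real.log (a j)) :=
  holder_ratio_bounds_cantorF2_general a x hxa n hno hpos y hy
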